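/- Let m = 0 and d = p ∈ ℕ = {1,2,...}. Let I¹ ⊆ V^p be the submodule generated by G v₀, and let 𝓘^p ⊆ V^p / I¹ be the submodule generated by the singular vector K^p S w₀ (w₀ the image of v₀). Then the factor module (V^p / I¹)/𝓘^p is irreducible and has dimension 2p + 1, with basis {K^ℓ |0⟩, K^ℓ S |0⟩ (ℓ = 0, 1, ..., p−1), K^p |0⟩}, where |0⟩ is the image of the lowest weight vector. -/

import Mathlib

/-!
In the PBW basis `G^k K^l S^a χ^c v₀` of `V^p`, the subspace generated by `G v₀` and `K^p S v₀`
is the span `killed p` of all PBW vectors except `K^l v₀` (`l ≤ p`) and `K^l S v₀` (`l < p`).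
It is invariant because every even generator is an anticommutator of the odd ones `Q, S, X`,
whose action on PBW vectors is explicit; conversely `Q G v₀ = χ v₀`, and closure under
`G, K, S, χ` produces every other PBW vector from `G v₀`, `χ v₀` and `K^p S v₀`.
The surviving vectors have the distinct `D`-eigenvalues `-p, …, p`, so an invariant subspace
strictly larger than `killed p` contains one of them; `Q` lowers it, with the nonzero
coefficients `l + 1` and `p - l`, down to `v₀`, which generates everything.
-/

/-- The `N = 1` super Schrödinger algebra 𝔰(1/1) represented on a complex vector space
`V`, together with the lowest weight (Verma) structure of conformal weight `d` and mass
`m`.  The even generators are `H, P, G, D, K, M` (satisfying the sch(1) relations, `M`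
central), the odd generators are `Q, S, X`, and `Chi` is the action of the odd scalar χ
(`χ² = m/2`, `X v₀ = χ v₀`).  Relations between generators not listed below vanish.
The Verma module `V^d` has (super) basis `{G^k K^ℓ v₀, G^k K^ℓ S v₀}` over the
coefficient superalgebra `ℂ[χ]`, i.e. the ℂ-basis `{G^k K^ℓ S^a χ^c v₀}`. -/
structure SSch1Verma (d m : ℂ) (V : Type*) [AddCommGroup V] [Module ℂ V] where
  H : Module.End ℂ V
  P : Module.End ℂ V
  G : Module.End ℂ V
  D : Module.End ℂ V
  K : Module.End ℂ V
  M : Module.End ℂ V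
  Q : Module.End ℂ V
  S : Module.End ℂ V
  X : Module.End ℂ V
  Chi : Module.End ℂ V
  -- nonvanishing even-even commutators
  rel_HD : H * D - D * H = (2 : ℂ) • H
  rel_HK : H * K - K * H = D
  rel_DK : D * K - K * D = (2 : ℂ) • K
  rel_PG : P * G - G * P = M
  rel_HG : H * G - G * H = P
  rel_DG : D * G - G * D = G
  rel_PD : P * D - D * P = P
  rel_PK : P * K - K * P = G
  -- vanishing even-even commutators
  rel_HP : H * P = P * H
  rel_HM : H * M = M * H
  rel_PM : P * M = M * P
  rel_GK : G * K = K * G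
  rel_GM : G * M = M * G
  rel_DM : D * M = M * D
  rel_KM : K * M = M * K
  -- nonvanishing even-odd commutators
  rel_QD : Q * D - D * Q = Q
  rel_QK : Q * K - K * Q = S
  rel_DS : D * S - S * D = S
  rel_HS : H * S - S * H = Q
  rel_QG : Q * G - G * Q = X
  rel_PS : P * S - S * P = X
  -- vanishing even-odd commutators
  rel_QH : Q * H = H * Q
  rel_QP : Q * P = P * Q
  rel_QM : Q * M = M * Q
  rel_SG : S * G = G * S
  rel_SK : S * K = K * S
  rel_SM : S * M = M * S
  rel_XH : X * H = H * X
  rel_XP : X * P = P * X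
  rel_XG : X * G = G * X
  rel_XD : X * D = D * X
  rel_XK : X * K = K * X
  rel_XM : X * M = M * X
  -- odd-odd anticommutators
  rel_QQ : Q * Q + Q * Q = -((2 : ℂ) • H)
  rel_SS : S * S + S * S = -((2 : ℂ) • K)
  rel_XX : X * X + X * X = -M
  rel_QX : Q * X + X * Q = -P
  rel_SX : S * X + X * S = -G
  rel_QS : Q * S + S * Q = -D
  -- χ is an odd scalar: it commutes with the even generators, anticommutes with the
  -- odd generators and satisfies χ² = m/2
  chi_H : Chi * H = H * Chi
  chi_P : Chi * P = P * Chi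
  chi_G : Chi * G = G * Chi
  chi_D : Chi * D = D * Chi
  chi_K : Chi * K = K * Chi
  chi_M : Chi * M = M * Chi
  chi_Q : Chi * Q = -(Q * Chi)
  chi_S : Chi * S = -(S * Chi)
  chi_X : Chi * X = -(X * Chi)
  chi_sq : Chi * Chi = (m / 2) • (1 : Module.End ℂ V)
  -- the lowest weight vector
  v0 : V
  lw_Q : Q v0 = 0
  lw_P : P v0 = 0
  lw_D : D v0 = (-d) • v0
  lw_M : M v0 = m • v0
  lw_X : X v0 = Chi v0
  -- PBW basis of the Verma module
  pbw_indep : LinearIndependent ℂ (fun i : ℕ × ℕ × Bool × Bool =>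
    (G ^ i.1 * K ^ i.2.1 * (if i.2.2.1 then S else 1) * (if i.2.2.2 then Chi else 1)) v0)
  pbw_span : Submodule.span ℂ (Set.range (fun i : ℕ × ℕ × Bool × Bool =>
    (G ^ i.1 * K ^ i.2.1 * (if i.2.2.1 then S else 1) * (if i.2.2.2 then Chi else 1)) v0)) = ⊤

namespace SSch1Verma

variable {d m : ℂ} {V : Type*} [AddCommGroup V] [Module ℂ V]

/-- A singular vector of the Verma module: homogeneous with respect to the `D`-grading
(i.e. a `D`-eigenvector), not a scalar multiple of the lowest weight vector `v₀`
(scalars being the coefficient superalgebra `ℂ[χ]`), and annihilated by `Q` and `P`. -/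
def IsSingular (ρ : SSch1Verma d m V) (v : V) : Prop :=
  (∃ n : ℂ, ρ.D v = n • v) ∧
  (∀ a b : ℂ, v ≠ a • ρ.v0 + b • ρ.Chi ρ.v0) ∧
  ρ.Q v = 0 ∧ ρ.P v = 0

/-- A subspace invariant under the action of 𝔰(1/1) (and under the odd scalar χ). -/
def Invariant (ρ : SSch1Verma d m V) (W : Submodule ℂ V) : Prop :=
  ∀ w ∈ W, ρ.H w ∈ W ∧ ρ.P w ∈ W ∧ ρ.G w ∈ W ∧ ρ.D w ∈ W ∧ ρ.K w ∈ W ∧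
    ρ.M w ∈ W ∧ ρ.Q w ∈ W ∧ ρ.S w ∈ W ∧ ρ.X w ∈ W ∧ ρ.Chi w ∈ W

/-- The submodule generated by a set of vectors: the smallest invariant subspace
containing it. -/
def gen (ρ : SSch1Verma d m V) (s : Set V) : Submodule ℂ V :=
  sInf {W | ρ.Invariant W ∧ s ⊆ W}

/-- A singular vector of the factor module `V/J`, expressed in terms of representatives:
homogeneous with respect to the induced `D`-grading, not a scalar multiple of the image
of the lowest weight vector, and annihilated by the induced actions of `Q` and `P`. -/
def IsSingularMod (ρ : SSch1Verma d m V) (J : Submodule ℂ V) (v : V) : Prop :=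
  (∃ n : ℂ, ρ.D v - n • v ∈ J) ∧
  (∀ a b : ℂ, v - (a • ρ.v0 + b • ρ.Chi ρ.v0) ∉ J) ∧
  ρ.Q v ∈ J ∧ ρ.P v ∈ J

end SSch1Verma

section General

variable {R M : Type*} [CommRing R] [AddCommGroup M] [Module R M]

theorem Module.End.apply_of_anticommutator_eq_neg {A B T : Module.End R M}
    (h : A * B + B * A = -T) (x : M) : T x = -(A (B x) + B (A x)) := by
  rw [← neg_neg T, ← h]; rfl

theorem Module.End.pow_apply_eq_smul_of_commutator {T A : Module.End R M} {c μ : R}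
    (hA : T * A - A * T = c • A) {x : M} (hx : T x = μ • x) (n : ℕ) :
    T ((A ^ n) x) = (μ + n * c) • (A ^ n) x := by
  induction n with
  | zero => simpa using hx
  | succ n ih =>
    have hTA : T (A ((A ^ n) x)) = A (T ((A ^ n) x)) + c • A ((A ^ n) x) := by
      rw [← Module.End.mul_apply, sub_eq_iff_eq_add.1 hA, add_comm]; rfl
    rw [pow_succ', Module.End.mul_apply, hTA, ih, map_smul, ← add_smul]
    congr 1
    push_cast
    ring

end General

section Eigen

variable {K V ι : Type*} [Field K] [AddCommGroup V] [Module K V]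

theorem Submodule.mem_of_sum_eigenvectors_mem {T : Module.End K V} {W : Submodule K V}
    (hW : ∀ w ∈ W, T w ∈ W) {μ : ι → K} {s : Finset ι} (hμ : Set.InjOn μ s) {v : ι → V}
    (hv : ∀ i ∈ s, T (v i) = μ i • v i) (hsum : ∑ i ∈ s, v i ∈ W) : ∀ i ∈ s, v i ∈ W := by
  classical
  induction s using Finset.induction_on generalizing v with
  | empty => simp
  | insert a s ha ih =>
    rw [Finset.sum_insert ha] at hsum
    have hμs : Set.InjOn μ s := hμ.mono (by simp)
    have hμa : ∀ i ∈ s, μ i - μ a ≠ 0 := fun i hi =>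
      sub_ne_zero.2 fun h => ha (hμ (by simp [hi]) (by simp) h ▸ hi)
    -- `T - μ a` kills `v a` and rescales every other `v i` by `μ i - μ a ≠ 0`
    have hshift : ∑ i ∈ s, (μ i - μ a) • v i ∈ W := by
      convert sub_mem (hW _ hsum) (W.smul_mem (μ a) hsum) using 1
      rw [map_add, map_sum, hv a (by simp), smul_add, Finset.smul_sum, add_sub_add_left_eq_sub,
        ← Finset.sum_sub_distrib]
      exact Finset.sum_congr rfl fun i hi => by rw [hv i (by simp [hi]), sub_smul]
    have hs : ∀ i ∈ s, v i ∈ W := fun i hi =>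
      (W.smul_mem_iff (hμa i hi)).1 <| ih hμs
        (fun j hj => by rw [map_smul, hv j (by simp [hj]), smul_comm]) hshift i hi
    intro i hi
    rcases Finset.mem_insert.1 hi with rfl | hi
    · simpa using sub_mem hsum (W.sum_mem hs)
    · exact hs i hi

end Eigen

section QuotientBasis

variable {ι κ R M : Type*} [Ring R] [AddCommGroup M] [Module R M] (b : Module.Basis ι R M)
  {f : κ → ι}

theorem Module.Basis.linearIndependent_mkQ_comp (hf : Function.Injective f) :
    LinearIndependent R ((Submodule.span R (b '' (Set.range f)ᶜ)).mkQ ∘ b ∘ f) := by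
  refine (b.linearIndependent.comp f hf).map ?_
  rw [Submodule.ker_mkQ, Set.range_comp]
  exact b.linearIndependent.disjoint_span_image disjoint_compl_right

theorem Module.Basis.span_range_mkQ_comp :
    Submodule.span R (Set.range ((Submodule.span R (b '' (Set.range f)ᶜ)).mkQ ∘ b ∘ f)) = ⊤ := by
  rw [Set.range_comp, ← Submodule.map_span, Submodule.map_mkQ_eq_top, Set.range_comp,
    ← Submodule.span_union, ← Set.image_union, Set.compl_union_self, Set.image_univ, b.span_eq]

end QuotientBasis

namespace SSch1Verma

section

variable {d m : ℂ} {V : Type*} [AddCommGroup V] [Module ℂ V] (ρ : SSch1Verma d m V)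

theorem gen_invariant (s : Set V) : ρ.Invariant (ρ.gen s) := by
  intro w hw
  simp only [gen, Submodule.mem_sInf] at hw ⊢
  refine ⟨?_, ?_, ?_, ?_, ?_, ?_, ?_, ?_, ?_, ?_⟩ <;> intro W hW <;> have h := hW.1 w (hw W hW) <;>
    tauto

theorem subset_gen (s : Set V) : s ⊆ ρ.gen s :=
  fun _ hx => Submodule.mem_sInf.2 fun _ hW => hW.2 hx

theorem gen_le {s : Set V} {W : Submodule ℂ V} (hW : ρ.Invariant W) (hs : s ⊆ W) :
    ρ.gen s ≤ W :=
  sInf_le ⟨hW, hs⟩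

/-- The even generators are anticommutators of the odd ones (`H = -Q²`, `K = -S²`, `M = -2X²`,
`D = -[Q,S]₊`, `P = -[Q,X]₊`, `G = -[S,X]₊`). -/
theorem invariant_of_odd {W : Submodule ℂ V} (hQ : ∀ w ∈ W, ρ.Q w ∈ W)
    (hS : ∀ w ∈ W, ρ.S w ∈ W) (hX : ∀ w ∈ W, ρ.X w ∈ W) (hChi : ∀ w ∈ W, ρ.Chi w ∈ W) :
    ρ.Invariant W := by
  have anti {A B T : Module.End ℂ V} (h : A * B + B * A = -T) (hA : ∀ w ∈ W, A w ∈ W)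
      (hB : ∀ w ∈ W, B w ∈ W) (w : V) (hw : w ∈ W) : T w ∈ W := by
    rw [Module.End.apply_of_anticommutator_eq_neg h]
    exact neg_mem (add_mem (hA _ (hB _ hw)) (hB _ (hA _ hw)))
  have half {T : Module.End ℂ V} (h : ∀ w ∈ W, ((2 : ℂ) • T) w ∈ W) (w : V) (hw : w ∈ W) :
      T w ∈ W :=
    (W.smul_mem_iff two_ne_zero).1 (h w hw)
  intro w hw
  exact ⟨half (anti ρ.rel_QQ hQ hQ) w hw, anti ρ.rel_QX hQ hX w hw, anti ρ.rel_SX hS hX w hw,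
    anti ρ.rel_QS hQ hS w hw, half (anti ρ.rel_SS hS hS) w hw, anti ρ.rel_XX hX hX w hw,
    hQ w hw, hS w hw, hX w hw, hChi w hw⟩

def pbw (k l : ℕ) (a c : Bool) : V :=
  (ρ.G ^ k * ρ.K ^ l * (if a then ρ.S else 1) * (if c then ρ.Chi else 1)) ρ.v0

noncomputable def pbwBasis : Module.Basis (ℕ × ℕ × Bool × Bool) ℂ V :=
  .mk ρ.pbw_indep ρ.pbw_span.ge

theorem pbwBasis_apply (k l : ℕ) (a c : Bool) : ρ.pbwBasis (k, l, a, c) = ρ.pbw k l a c :=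
  Module.Basis.mk_apply _ _ _

theorem pbw_eq (k l : ℕ) (a c : Bool) : ρ.pbw k l a c = (ρ.G ^ k * ρ.K ^ l) (ρ.pbw 0 0 a c) := by
  cases a <;> cases c <;> simp [pbw, Module.End.mul_apply]

theorem pbw_eq_pow (k l : ℕ) (a c : Bool) :
    ρ.pbw k l a c = (ρ.G ^ k) ((ρ.K ^ l) ((ρ.S ^ a.toNat) ((ρ.Chi ^ c.toNat) ρ.v0))) := by
  cases a <;> cases c <;> simp [pbw, Module.End.mul_apply]

@[simp] theorem pbw_zero_zero_false_false : ρ.pbw 0 0 false false = ρ.v0 := by simp [pbw]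

@[simp] theorem pbw_zero_zero_false_true : ρ.pbw 0 0 false true = ρ.Chi ρ.v0 := by simp [pbw]

theorem pbw_zero_zero_true (c : Bool) : ρ.pbw 0 0 true c = ρ.S (ρ.pbw 0 0 false c) := by
  cases c <;> simp [pbw, Module.End.mul_apply]

theorem apply_pbw_of_commute {T : Module.End ℂ V} (hG : Commute T ρ.G) (hK : Commute T ρ.K)
    (k l : ℕ) (a c : Bool) : T (ρ.pbw k l a c) = (ρ.G ^ k * ρ.K ^ l) (T (ρ.pbw 0 0 a c)) := by
  rw [pbw_eq, ← Module.End.mul_apply, ((hG.pow_right k).mul_right (hK.pow_right l)).eq]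
  rfl

theorem G_pbw (k l : ℕ) (a c : Bool) : ρ.G (ρ.pbw k l a c) = ρ.pbw (k + 1) l a c := by
  simp only [pbw, ← Module.End.mul_apply, ← mul_assoc, ← pow_succ']

theorem K_pbw (k l : ℕ) (a c : Bool) : ρ.K (ρ.pbw k l a c) = ρ.pbw k (l + 1) a c := by
  rw [apply_pbw_of_commute ρ ρ.rel_GK.symm (Commute.refl _), pbw_eq ρ k (l + 1), pow_succ,
    ← mul_assoc]
  rfl

theorem S_S_apply (x : V) : ρ.S (ρ.S x) = -ρ.K x := by
  have h := Module.End.apply_of_anticommutator_eq_neg ρ.rel_SS x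
  rw [LinearMap.smul_apply, two_smul] at h
  apply smul_right_injective V (two_ne_zero : (2 : ℂ) ≠ 0)
  simp only [two_smul]
  linear_combination (norm := module) h

theorem S_pbw_false (k l : ℕ) (c : Bool) : ρ.S (ρ.pbw k l false c) = ρ.pbw k l true c := by
  rw [apply_pbw_of_commute ρ ρ.rel_SG ρ.rel_SK, ← pbw_zero_zero_true, ← pbw_eq]

theorem S_pbw_true (k l : ℕ) (c : Bool) : ρ.S (ρ.pbw k l true c) = -ρ.pbw k (l + 1) false c := by
  rw [← S_pbw_false, S_S_apply, K_pbw]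

theorem Chi_S_apply (x : V) : ρ.Chi (ρ.S x) = -ρ.S (ρ.Chi x) := LinearMap.congr_fun ρ.chi_S x

theorem Q_K_apply (x : V) : ρ.Q (ρ.K x) = ρ.K (ρ.Q x) + ρ.S x :=
  eq_add_of_sub_eq' (LinearMap.congr_fun ρ.rel_QK x)

theorem Q_G_apply (x : V) : ρ.Q (ρ.G x) = ρ.G (ρ.Q x) + ρ.X x :=
  eq_add_of_sub_eq' (LinearMap.congr_fun ρ.rel_QG x)

theorem Q_Chi_apply (x : V) : ρ.Q (ρ.Chi x) = -ρ.Chi (ρ.Q x) := by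
  have h : ρ.Chi (ρ.Q x) = -ρ.Q (ρ.Chi x) := LinearMap.congr_fun ρ.chi_Q x
  rw [h, neg_neg]

theorem Q_S_apply (x : V) : ρ.Q (ρ.S x) = -ρ.S (ρ.Q x) - ρ.D x := by
  rw [Module.End.apply_of_anticommutator_eq_neg ρ.rel_QS x]
  abel

theorem Chi_pbw_false_false (k l : ℕ) : ρ.Chi (ρ.pbw k l false false) = ρ.pbw k l false true := by
  rw [apply_pbw_of_commute ρ ρ.chi_G ρ.chi_K, pbw_zero_zero_false_false,
    ← pbw_zero_zero_false_true, ← pbw_eq]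

theorem Chi_pbw_true_false (k l : ℕ) : ρ.Chi (ρ.pbw k l true false) = -ρ.pbw k l true true := by
  rw [apply_pbw_of_commute ρ ρ.chi_G ρ.chi_K, pbw_zero_zero_true, Chi_S_apply,
    pbw_zero_zero_false_false, ← pbw_zero_zero_false_true, ← pbw_zero_zero_true, map_neg,
    ← pbw_eq]

theorem D_pbw (k l : ℕ) (a c : Bool) :
    ρ.D (ρ.pbw k l a c) = (((k + 2 * l + a.toNat : ℕ) : ℂ) - d) • ρ.pbw k l a c := by
  have hChi : ρ.D * ρ.Chi - ρ.Chi * ρ.D = (0 : ℂ) • ρ.Chi := by rw [zero_smul, ρ.chi_D, sub_self]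
  have hS : ρ.D * ρ.S - ρ.S * ρ.D = (1 : ℂ) • ρ.S := by rw [one_smul, ρ.rel_DS]
  have hG : ρ.D * ρ.G - ρ.G * ρ.D = (1 : ℂ) • ρ.G := by rw [one_smul, ρ.rel_DG]
  rw [pbw_eq_pow, Module.End.pow_apply_eq_smul_of_commutator hG
    (Module.End.pow_apply_eq_smul_of_commutator ρ.rel_DK
      (Module.End.pow_apply_eq_smul_of_commutator hS
        (Module.End.pow_apply_eq_smul_of_commutator hChi ρ.lw_D _) _) _) _]
  congr 1
  push_cast
  ring

theorem Q_pbw_zero_succ_false (l : ℕ) :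
    ρ.Q (ρ.pbw 0 (l + 1) false false) = ((l : ℂ) + 1) • ρ.pbw 0 l true false := by
  induction l with
  | zero =>
    rw [← K_pbw, Q_K_apply, pbw_zero_zero_false_false, ρ.lw_Q, map_zero, zero_add,
      ← pbw_zero_zero_false_false, S_pbw_false]
    simp
  | succ l ih =>
    rw [← K_pbw, Q_K_apply, ih, map_smul, K_pbw, S_pbw_false]
    push_cast
    module

theorem Q_pbw_zero_true (l : ℕ) :
    ρ.Q (ρ.pbw 0 l true false) = (d - l) • ρ.pbw 0 l false false := by
  rw [← S_pbw_false, Q_S_apply, D_pbw]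
  cases l with
  | zero => simp [ρ.lw_Q]
  | succ l =>
    rw [Q_pbw_zero_succ_false, map_smul, S_pbw_true]
    push_cast [Bool.toNat_false]
    module

end

section

variable {d m : ℂ} {V : Type*} [AddCommGroup V] [Module ℂ V] {ρ : SSch1Verma d m V}
  {W : Submodule ℂ V} {w : V}

theorem Invariant.G_mem (hW : ρ.Invariant W) (hw : w ∈ W) : ρ.G w ∈ W := (hW w hw).2.2.1
theorem Invariant.D_mem (hW : ρ.Invariant W) (hw : w ∈ W) : ρ.D w ∈ W := (hW w hw).2.2.2.1
theorem Invariant.K_mem (hW : ρ.Invariant W) (hw : w ∈ W) : ρ.K w ∈ W := (hW w hw).2.2.2.2.1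
theorem Invariant.Q_mem (hW : ρ.Invariant W) (hw : w ∈ W) : ρ.Q w ∈ W :=
  (hW w hw).2.2.2.2.2.2.1
theorem Invariant.S_mem (hW : ρ.Invariant W) (hw : w ∈ W) : ρ.S w ∈ W :=
  (hW w hw).2.2.2.2.2.2.2.1
theorem Invariant.Chi_mem (hW : ρ.Invariant W) (hw : w ∈ W) : ρ.Chi w ∈ W :=
  (hW w hw).2.2.2.2.2.2.2.2.2

/-- `2 * l + a` counts the factors `S` of `K^l S^a`, as `K = -S²`. -/
theorem Invariant.pbw_mem_of_le (hW : ρ.Invariant W) {k l k' l' : ℕ} {a c a' c' : Bool}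
    (h : ρ.pbw k l a c ∈ W) (hk : k ≤ k') (hl : 2 * l + a.toNat ≤ 2 * l' + a'.toNat)
    (hc : c ≤ c') : ρ.pbw k' l' a' c' ∈ W := by
  have hGK {k l a c} (h : ρ.pbw k l a c ∈ W) (i j : ℕ) : ρ.pbw (k + i) (l + j) a c ∈ W := by
    induction i with
    | zero =>
      induction j with
      | zero => exact h
      | succ j ih => simpa only [K_pbw, ← add_assoc] using hW.K_mem ih
    | succ i ih => simpa only [G_pbw, ← add_assoc] using hW.G_mem ih
  have hChi : ρ.pbw k l a c' ∈ W := by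
    cases c'
    · obtain rfl : c = false := le_bot_iff.1 hc
      exact h
    · cases c
      · cases a
        · simpa only [Chi_pbw_false_false] using hW.Chi_mem h
        · simpa only [Chi_pbw_true_false, neg_mem_iff] using hW.Chi_mem h
      · exact h
  obtain ⟨i, rfl⟩ := Nat.exists_eq_add_of_le hk
  cases a <;> cases a' <;> simp only [Bool.toNat_false, Bool.toNat_true] at hl
  · obtain ⟨j, rfl⟩ := Nat.exists_eq_add_of_le (show l ≤ l' by omega)
    exact hGK hChi i j
  · obtain ⟨j, rfl⟩ := Nat.exists_eq_add_of_le (show l ≤ l' by omega)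
    simpa only [S_pbw_false] using hW.S_mem (hGK hChi i j)
  · obtain ⟨j, rfl⟩ := Nat.exists_eq_add_of_le (show l + 1 ≤ l' by omega)
    have := hW.S_mem hChi
    rw [S_pbw_true, neg_mem_iff] at this
    exact hGK this i j
  · obtain ⟨j, rfl⟩ := Nat.exists_eq_add_of_le (show l ≤ l' by omega)
    exact hGK hChi i j

theorem Invariant.eq_top_of_v0_mem (hW : ρ.Invariant W) (h : ρ.v0 ∈ W) : W = ⊤ := by
  rw [eq_top_iff, ← ρ.pbwBasis.span_eq, Submodule.span_le]
  rintro _ ⟨⟨k, l, a, c⟩, rfl⟩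
  rw [pbwBasis_apply]
  exact hW.pbw_mem_of_le (ρ.pbw_zero_zero_false_false ▸ h) (Nat.zero_le k) (by simp)
    (Bool.false_le c)

end

/-- Indices of the PBW vectors `K^l v₀` (`l ≤ p`) and `K^l S v₀` (`l < p`), which survive in the
quotient. -/
def IsSurviving (p : ℕ) (i : ℕ × ℕ × Bool × Bool) : Prop :=
  i.1 = 0 ∧ i.2.2.2 = false ∧ i.2.1 + i.2.2.1.toNat ≤ p

def survivingIndex (p : ℕ) : Fin (p + 1) ⊕ Fin p → ℕ × ℕ × Bool × Bool :=
  Sum.elim (fun ℓ => (0, ℓ, false, false)) (fun ℓ => (0, ℓ, true, false))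

theorem survivingIndex_injective (p : ℕ) : Function.Injective (survivingIndex p) := by
  rintro (i | i) (j | j) h <;> simp_all [survivingIndex, Fin.ext_iff]

theorem range_survivingIndex (p : ℕ) : Set.range (survivingIndex p) = {i | IsSurviving p i} := by
  ext ⟨k, l, a, c⟩
  simp only [Set.mem_range, Set.mem_ofPred_eq, IsSurviving]
  constructor
  · rintro ⟨ℓ | ℓ, h⟩ <;> simp only [survivingIndex, Sum.elim_inl, Sum.elim_inr,
      Prod.mk.injEq] at h <;> obtain ⟨rfl, rfl, rfl, rfl⟩ := h <;> simp only [Bool.toNat_false,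
      Bool.toNat_true, true_and] <;> omega
  · rintro ⟨rfl, rfl, h⟩
    cases a
    · exact ⟨.inl ⟨l, by simp at h; omega⟩, rfl⟩
    · exact ⟨.inr ⟨l, by simp at h; omega⟩, rfl⟩

def pbwWeight (i : ℕ × ℕ × Bool × Bool) : ℕ := i.1 + 2 * i.2.1 + i.2.2.1.toNat

theorem pbwWeight_injOn (p : ℕ) : Set.InjOn pbwWeight {i | IsSurviving p i} := by
  rintro ⟨k, l, a, c⟩ ⟨rfl, rfl, -⟩ ⟨k', l', a', c'⟩ ⟨rfl, rfl, -⟩ h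
  simp only [pbwWeight] at h
  cases a <;> cases a' <;> simp at h ⊢ <;> omega

section

variable {d m : ℂ} {V : Type*} [AddCommGroup V] [Module ℂ V] (ρ : SSch1Verma d m V)

def killed (p : ℕ) : Submodule ℂ V :=
  Submodule.span ℂ (ρ.pbwBasis '' {i | ¬ IsSurviving p i})

theorem killed_eq_span_compl_range (p : ℕ) :
    ρ.killed p = Submodule.span ℂ (ρ.pbwBasis '' (Set.range (survivingIndex p))ᶜ) := by
  rw [range_survivingIndex, Set.compl_ofPred, killed]

theorem D_pbwBasis (i : ℕ × ℕ × Bool × Bool) :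
    ρ.D (ρ.pbwBasis i) = ((pbwWeight i : ℂ) - d) • ρ.pbwBasis i := by
  obtain ⟨k, l, a, c⟩ := i
  rw [pbwBasis_apply, D_pbw, pbwWeight]

theorem pbw_mem_killed {p k l : ℕ} {a c : Bool} (h : ¬ IsSurviving p (k, l, a, c)) :
    ρ.pbw k l a c ∈ ρ.killed p :=
  Submodule.subset_span ⟨(k, l, a, c), h, ρ.pbwBasis_apply k l a c⟩

theorem sum_elim_mkQ_eq_comp_survivingIndex {p : ℕ} (J : Submodule ℂ V) :
    (fun i => Sum.elim (fun ℓ : Fin (p + 1) => J.mkQ ((ρ.K ^ (ℓ : ℕ)) ρ.v0))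
      (fun ℓ : Fin p => J.mkQ ((ρ.K ^ (ℓ : ℕ) * ρ.S) ρ.v0)) i) =
      J.mkQ ∘ ρ.pbwBasis ∘ survivingIndex p := by
  funext i
  rcases i with ℓ | ℓ <;> simp [survivingIndex, pbwBasis_apply, pbw]

theorem apply_mem_of_forall_pbw {T : Module.End ℂ V} {W : Submodule ℂ V}
    (h : ∀ k l a c, T (ρ.pbw k l a c) ∈ W) (v : V) : T v ∈ W := by
  have : ⊤ ≤ W.comap T := by
    rw [← ρ.pbwBasis.span_eq, Submodule.span_le]
    rintro _ ⟨⟨k, l, a, c⟩, rfl⟩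
    exact (ρ.pbwBasis_apply k l a c).symm ▸ h k l a c
  exact this trivial

theorem apply_mem_of_mem_killed {p : ℕ} {T : Module.End ℂ V} {W : Submodule ℂ V}
    (h : ∀ k l a c, ¬ IsSurviving p (k, l, a, c) → T (ρ.pbw k l a c) ∈ W) {w : V}
    (hw : w ∈ ρ.killed p) : T w ∈ W := by
  have : ρ.killed p ≤ W.comap T := by
    rw [killed, Submodule.span_le]
    rintro _ ⟨⟨k, l, a, c⟩, hi, rfl⟩
    exact (ρ.pbwBasis_apply k l a c).symm ▸ h k l a c hi
  exact this hw

end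

section

variable {V : Type*} [AddCommGroup V] [Module ℂ V] {p : ℕ} (ρ : SSch1Verma (p : ℂ) 0 V)

theorem Chi_Chi_apply (x : V) : ρ.Chi (ρ.Chi x) = 0 := by
  simpa using LinearMap.congr_fun ρ.chi_sq x

theorem Chi_pbw_true (k l : ℕ) (a : Bool) : ρ.Chi (ρ.pbw k l a true) = 0 := by
  rw [apply_pbw_of_commute ρ ρ.chi_G ρ.chi_K]
  cases a
  · rw [pbw_zero_zero_false_true, Chi_Chi_apply, map_zero]
  · rw [pbw_zero_zero_true, Chi_S_apply, pbw_zero_zero_false_true, Chi_Chi_apply, map_zero,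
      neg_zero, map_zero]

theorem G_mem_killed (v : V) : ρ.G v ∈ ρ.killed p :=
  ρ.apply_mem_of_forall_pbw (fun k l a c => G_pbw ρ k l a c ▸ ρ.pbw_mem_killed (by
    simp [IsSurviving])) v

theorem Chi_mem_killed (v : V) : ρ.Chi v ∈ ρ.killed p := by
  refine ρ.apply_mem_of_forall_pbw (fun k l a c => ?_) v
  cases c
  · cases a
    · exact Chi_pbw_false_false ρ k l ▸ ρ.pbw_mem_killed (by simp [IsSurviving])
    · exact Chi_pbw_true_false ρ k l ▸ neg_mem (ρ.pbw_mem_killed (by simp [IsSurviving]))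
  · exact Chi_pbw_true ρ k l a ▸ zero_mem _

theorem K_mem_killed {w : V} (hw : w ∈ ρ.killed p) : ρ.K w ∈ ρ.killed p :=
  ρ.apply_mem_of_mem_killed (fun k l a c h => K_pbw ρ k l a c ▸ ρ.pbw_mem_killed (by
    simp only [IsSurviving, not_and, not_le] at h ⊢; exact fun hk hc => (h hk hc).trans_le
      (by omega))) hw

theorem S_mem_killed {w : V} (hw : w ∈ ρ.killed p) : ρ.S w ∈ ρ.killed p := by
  refine ρ.apply_mem_of_mem_killed (fun k l a c h => ?_) hw
  simp only [IsSurviving, not_and, not_le] at h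
  cases a
  · refine S_pbw_false ρ k l c ▸ ρ.pbw_mem_killed ?_
    simp only [IsSurviving, not_and, not_le]
    exact fun hk hc => (h hk hc).trans_le (by simp)
  · refine S_pbw_true ρ k l c ▸ neg_mem (ρ.pbw_mem_killed ?_)
    simp only [IsSurviving, not_and, not_le]
    exact fun hk hc => (h hk hc).trans_le (by simp)

theorem X_mem_killed (v : V) : ρ.X v ∈ ρ.killed p := by
  have X_S (y : V) : ρ.X (ρ.S y) = -ρ.S (ρ.X y) - ρ.G y := by
    rw [Module.End.apply_of_anticommutator_eq_neg ρ.rel_SX y]; abel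
  have X_Chi_v0 : ρ.X (ρ.Chi ρ.v0) = 0 := by
    have h : ρ.Chi (ρ.X ρ.v0) = -ρ.X (ρ.Chi ρ.v0) := LinearMap.congr_fun ρ.chi_X ρ.v0
    rwa [ρ.lw_X, Chi_Chi_apply, eq_comm, neg_eq_zero] at h
  refine ρ.apply_mem_of_forall_pbw (fun k l a c => ?_) v
  induction k with
  | succ k _ =>
    rw [← G_pbw, ← Module.End.mul_apply, ρ.rel_XG, Module.End.mul_apply]
    exact ρ.G_mem_killed _
  | zero =>
    induction l with
    | succ l ih =>
      rw [← K_pbw, ← Module.End.mul_apply, ρ.rel_XK, Module.End.mul_apply]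
      exact ρ.K_mem_killed ih
    | zero =>
      cases a <;> cases c <;>
        simp only [pbw_zero_zero_true, pbw_zero_zero_false_false, pbw_zero_zero_false_true,
          X_S, ρ.lw_X, X_Chi_v0, map_zero, neg_zero, zero_sub]
      · exact ρ.Chi_mem_killed _
      · exact zero_mem _
      · exact sub_mem (neg_mem (ρ.S_mem_killed (ρ.Chi_mem_killed _))) (ρ.G_mem_killed _)
      · exact neg_mem (ρ.G_mem_killed _)

theorem Q_mem_killed {w : V} (hw : w ∈ ρ.killed p) : ρ.Q w ∈ ρ.killed p := by
  refine ρ.apply_mem_of_mem_killed (fun k l a c h => ?_) hw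
  simp only [IsSurviving, not_and, not_le] at h
  cases k with
  | succ k =>
    rw [← G_pbw, Q_G_apply]
    exact add_mem (ρ.G_mem_killed _) (ρ.X_mem_killed _)
  | zero =>
    cases c with
    | true =>
      obtain ⟨y, hy⟩ : ∃ y, ρ.pbw 0 l a true = ρ.Chi y := by
        cases a
        · exact ⟨_, (Chi_pbw_false_false ρ 0 l).symm⟩
        · exact ⟨-ρ.pbw 0 l true false, by rw [map_neg, Chi_pbw_true_false, neg_neg]⟩
      rw [hy, Q_Chi_apply]
      exact neg_mem (ρ.Chi_mem_killed _)
    | false =>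
      have hl := h rfl rfl
      cases a with
      | false =>
        obtain ⟨l, rfl⟩ : ∃ l', l = l' + 1 := ⟨l - 1, by simp at hl; omega⟩
        rw [Q_pbw_zero_succ_false]
        exact Submodule.smul_mem _ _ (ρ.pbw_mem_killed (by simp [IsSurviving]; simpa using hl))
      | true =>
        rw [Q_pbw_zero_true]
        rcases eq_or_ne l p with rfl | hlp
        · rw [sub_self, zero_smul]
          exact zero_mem _
        · exact Submodule.smul_mem _ _ (ρ.pbw_mem_killed (by simp [IsSurviving] at hl ⊢; omega))

theorem killed_invariant : ρ.Invariant (ρ.killed p) :=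
  ρ.invariant_of_odd (fun _ => ρ.Q_mem_killed) (fun _ => ρ.S_mem_killed)
    (fun w _ => ρ.X_mem_killed w) (fun w _ => ρ.Chi_mem_killed w)

theorem gen_eq_killed : ρ.gen {ρ.G ρ.v0, (ρ.K ^ p * ρ.S) ρ.v0} = ρ.killed p := by
  have hKS : (ρ.K ^ p * ρ.S) ρ.v0 = ρ.pbw 0 p true false := by simp [pbw]
  have hG : ρ.G ρ.v0 = ρ.pbw 1 0 false false := by
    rw [← pbw_zero_zero_false_false, G_pbw]
  apply le_antisymm
  · refine ρ.gen_le ρ.killed_invariant ?_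
    rintro _ (rfl | rfl)
    · exact ρ.G_mem_killed _
    · rw [hKS]; exact ρ.pbw_mem_killed (by simp [IsSurviving])
  · set J := ρ.gen {ρ.G ρ.v0, (ρ.K ^ p * ρ.S) ρ.v0}
    have hJ : ρ.Invariant J := ρ.gen_invariant _
    have hGJ : ρ.pbw 1 0 false false ∈ J := hG ▸ ρ.subset_gen _ (by simp)
    have hKSJ : ρ.pbw 0 p true false ∈ J := hKS ▸ ρ.subset_gen _ (by simp)
    -- `Q G v₀ = X v₀ = χ v₀`
    have hChiJ : ρ.pbw 0 0 false true ∈ J := by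
      have h := hJ.Q_mem (hG ▸ hGJ)
      rwa [Q_G_apply, ρ.lw_Q, map_zero, zero_add, ρ.lw_X, ← pbw_zero_zero_false_true] at h
    rw [killed, Submodule.span_le]
    rintro _ ⟨⟨k, l, a, c⟩, h, rfl⟩
    simp only [IsSurviving, not_and, not_le, Set.mem_ofPred_eq] at h
    rw [SetLike.mem_coe, pbwBasis_apply]
    rcases Nat.eq_zero_or_pos k with rfl | hk
    · cases c
      · have hl := h rfl rfl
        exact hJ.pbw_mem_of_le hKSJ le_rfl (by cases a <;> simp at hl ⊢ <;> omega) le_rfl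
      · exact hJ.pbw_mem_of_le hChiJ le_rfl (by simp) le_rfl
    · exact hJ.pbw_mem_of_le hGJ hk (by simp) (Bool.false_le c)

end

section

variable {V : Type*} [AddCommGroup V] [Module ℂ V] {p : ℕ} {ρ : SSch1Verma (p : ℂ) 0 V}
  {W : Submodule ℂ V}

/-- Surviving PBW vectors are `D`-eigenvectors with pairwise distinct eigenvalues. -/
theorem Invariant.exists_surviving_mem (hW : ρ.Invariant W) (hkW : ρ.killed p ≤ W)
    (hWk : ¬ W ≤ ρ.killed p) : ∃ i, IsSurviving p i ∧ ρ.pbwBasis i ∈ W := by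
  classical
  obtain ⟨w, hwW, hwk⟩ := SetLike.not_le_iff_exists.1 hWk
  set b := ρ.pbwBasis
  set s := (b.repr w).support.filter (IsSurviving p)
  obtain ⟨j, hjw, hj⟩ : ∃ j ∈ (b.repr w).support, IsSurviving p j := by
    by_contra! h
    exact hwk ((b.mem_span_image).2 fun i hi => h i hi)
  have hsplit : w = ∑ i ∈ s, b.repr w i • b i +
      ∑ i ∈ (b.repr w).support.filter (¬ IsSurviving p ·), b.repr w i • b i := by
    rw [Finset.sum_filter_add_sum_filter_not]
    conv_lhs => rw [← b.linearCombination_repr w]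
    rfl
  have hsW : ∑ i ∈ s, b.repr w i • b i ∈ W := by
    have hrest : ∑ i ∈ (b.repr w).support.filter (¬ IsSurviving p ·), b.repr w i • b i ∈ W :=
      hkW (Submodule.sum_mem _ fun i hi => Submodule.smul_mem _ _
        (Submodule.subset_span ⟨i, (Finset.mem_filter.1 hi).2, rfl⟩))
    rw [eq_sub_of_add_eq hsplit.symm]
    exact sub_mem hwW hrest
  have hinj : Set.InjOn (fun i => (pbwWeight i : ℂ) - p) s := fun i hi j hj h =>
    pbwWeight_injOn p (Finset.mem_filter.1 hi).2 (Finset.mem_filter.1 hj).2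
      (by exact_mod_cast sub_left_inj.1 h)
  have hjW := Submodule.mem_of_sum_eigenvectors_mem (fun _ => hW.D_mem) hinj
    (fun i _ => by rw [map_smul, D_pbwBasis, smul_comm]) hsW j (Finset.mem_filter.2 ⟨hjw, hj⟩)
  exact ⟨j, hj, (W.smul_mem_iff (Finsupp.mem_support_iff.1 hjw)).1 hjW⟩

theorem Invariant.v0_mem_of_surviving_mem (hW : ρ.Invariant W) {i : ℕ × ℕ × Bool × Bool}
    (hi : IsSurviving p i) (h : ρ.pbwBasis i ∈ W) : ρ.v0 ∈ W := by
  have lower_true {l : ℕ} (hl : l < p) (h : ρ.pbw 0 l true false ∈ W) :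
      ρ.pbw 0 l false false ∈ W := by
    have h' := hW.Q_mem h
    rw [Q_pbw_zero_true] at h'
    exact (W.smul_mem_iff (sub_ne_zero.2 (by exact_mod_cast hl.ne'))).1 h'
  have lower_false {l : ℕ} (h : ρ.pbw 0 (l + 1) false false ∈ W) :
      ρ.pbw 0 l true false ∈ W := by
    have h' := hW.Q_mem h
    rw [Q_pbw_zero_succ_false] at h'
    exact (W.smul_mem_iff (by exact_mod_cast l.succ_ne_zero)).1 h'
  have descend (l : ℕ) (hl : l ≤ p) (h : ρ.pbw 0 l false false ∈ W) : ρ.v0 ∈ W := by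
    induction l with
    | zero => simpa using h
    | succ l ih => exact ih (by omega) (lower_true (by omega) (lower_false h))
  obtain ⟨k, l, a, c⟩ := i
  obtain ⟨rfl, rfl, hl⟩ := hi
  rw [pbwBasis_apply] at h
  cases a
  · exact descend l (by simpa using hl) h
  · exact descend l (by simp at hl; omega) (lower_true (by simp at hl; omega) h)

theorem Invariant.eq_killed_or_eq_top (hW : ρ.Invariant W) (hkW : ρ.killed p ≤ W) :
    W = ρ.killed p ∨ W = ⊤ := by
  by_cases hWk : W ≤ ρ.killed p
  · exact .inl (le_antisymm hWk hkW)
  · obtain ⟨i, hi, hiW⟩ := hW.exists_surviving_mem hkW hWk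
    exact .inr (hW.eq_top_of_v0_mem (hW.v0_mem_of_surviving_mem hi hiW))

end

end SSch1Verma

theorem statement9_general {V : Type*} [AddCommGroup V] [Module ℂ V] (p : ℕ)
    (ρ : SSch1Verma (p : ℂ) 0 V) :
    (∀ W : Submodule ℂ V, ρ.Invariant W →
      ρ.gen {ρ.G ρ.v0, (ρ.K ^ p * ρ.S) ρ.v0} ≤ W →
      W = ρ.gen {ρ.G ρ.v0, (ρ.K ^ p * ρ.S) ρ.v0} ∨ W = ⊤) ∧
    Module.finrank ℂ (V ⧸ ρ.gen {ρ.G ρ.v0, (ρ.K ^ p * ρ.S) ρ.v0}) = 2 * p + 1 ∧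
    (LinearIndependent ℂ (fun i : Fin (p + 1) ⊕ Fin p =>
        Sum.elim
          (fun ℓ : Fin (p + 1) =>
            (ρ.gen {ρ.G ρ.v0, (ρ.K ^ p * ρ.S) ρ.v0}).mkQ ((ρ.K ^ (ℓ : ℕ)) ρ.v0))
          (fun ℓ : Fin p =>
            (ρ.gen {ρ.G ρ.v0, (ρ.K ^ p * ρ.S) ρ.v0}).mkQ ((ρ.K ^ (ℓ : ℕ) * ρ.S) ρ.v0)) i) ∧
      Submodule.span ℂ (Set.range (fun i : Fin (p + 1) ⊕ Fin p =>
        Sum.elim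
          (fun ℓ : Fin (p + 1) =>
            (ρ.gen {ρ.G ρ.v0, (ρ.K ^ p * ρ.S) ρ.v0}).mkQ ((ρ.K ^ (ℓ : ℕ)) ρ.v0))
          (fun ℓ : Fin p =>
            (ρ.gen {ρ.G ρ.v0, (ρ.K ^ p * ρ.S) ρ.v0}).mkQ ((ρ.K ^ (ℓ : ℕ) * ρ.S) ρ.v0)) i)) = ⊤) := by
  have hli := ρ.pbwBasis.linearIndependent_mkQ_comp (SSch1Verma.survivingIndex_injective p)
  have hspan := ρ.pbwBasis.span_range_mkQ_comp (f := SSch1Verma.survivingIndex p)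
  rw [← SSch1Verma.killed_eq_span_compl_range] at hli hspan
  rw [ρ.gen_eq_killed, ρ.sum_elim_mkQ_eq_comp_survivingIndex]
  refine ⟨fun W hW => hW.eq_killed_or_eq_top, ?_, hli, hspan⟩
  rw [Module.finrank_eq_card_basis (Module.Basis.mk hli hspan.ge)]
  simp only [Fintype.card_sum, Fintype.card_fin]
  ring

/-- Let `m = 0` and `d = p ∈ ℕ = {1,2,...}`.  Let `I¹ ⊆ V^p` be the
submodule generated by `G v₀` and `𝓘^p` the submodule of `V^p / I¹` generated by the
singular vector `K^p S w₀`; their join corresponds to the invariant subspace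
`J = gen {G v₀, K^p S v₀}` of `V^p`.  Then the factor module `(V^p / I¹)/𝓘^p = V^p / J`
is irreducible, has dimension `2p + 1`, and has basis
`{K^ℓ |0⟩, K^ℓ S |0⟩ (ℓ = 0, …, p-1), K^p |0⟩}`. -/
theorem statement9 {V : Type*} [AddCommGroup V] [Module ℂ V] (p : ℕ) (hp : 1 ≤ p)
    (ρ : SSch1Verma (p : ℂ) 0 V) :
    (∀ W : Submodule ℂ V, ρ.Invariant W →
      ρ.gen {ρ.G ρ.v0, (ρ.K ^ p * ρ.S) ρ.v0} ≤ W →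
      W = ρ.gen {ρ.G ρ.v0, (ρ.K ^ p * ρ.S) ρ.v0} ∨ W = ⊤) ∧
    Module.finrank ℂ (V ⧸ ρ.gen {ρ.G ρ.v0, (ρ.K ^ p * ρ.S) ρ.v0}) = 2 * p + 1 ∧
    (LinearIndependent ℂ (fun i : Fin (p + 1) ⊕ Fin p =>
        Sum.elim
          (fun ℓ : Fin (p + 1) =>
            (ρ.gen {ρ.G ρ.v0, (ρ.K ^ p * ρ.S) ρ.v0}).mkQ ((ρ.K ^ (ℓ : ℕ)) ρ.v0))
          (fun ℓ : Fin p =>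
            (ρ.gen {ρ.G ρ.v0, (ρ.K ^ p * ρ.S) ρ.v0}).mkQ ((ρ.K ^ (ℓ : ℕ) * ρ.S) ρ.v0)) i) ∧
      Submodule.span ℂ (Set.range (fun i : Fin (p + 1) ⊕ Fin p =>
        Sum.elim
          (fun ℓ : Fin (p + 1) =>
            (ρ.gen {ρ.G ρ.v0, (ρ.K ^ p * ρ.S) ρ.v0}).mkQ ((ρ.K ^ (ℓ : ℕ)) ρ.v0))
          (fun ℓ : Fin p =>
            (ρ.gen {ρ.G ρ.v0, (ρ.K ^ p * ρ.S) ρ.v0}).mkQ ((ρ.K ^ (ℓ : ℕ) * ρ.S) ρ.v0)) i)) = ⊤) :=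
  statement9_general p ρ
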